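/- Let x be an optimal solution of the minimax problem (minimize Z(x) = max_j x_j over S(A,b)). Then x is the greatest optimal solution (i.e., every other optimal solution is ≤ x componentwise) if and only if x_1 = x_2 = ... = x_n = Z(x). Moreover, the set of optimal solutions always has a greatest element when S(A,b) ≠ ∅. -/

import Mathlib

open Finset

noncomputable section

/-- Łukasiewicz t-norm. -/
def TL (a x : ℝ) : ℝ := max (a + x - 1) 0

/-- Solution set of the addition-Łukasiewicz system. -/
def Sset {m n : ℕ} (A : Fin m → Fin n → ℝ) (b : Fin m → ℝ) : Set (Fin n → ℝ) :=
  {x | (∀ j, x j ∈ Set.Icc (0:ℝ) 1) ∧ ∀ i, b i ≤ ∑ j, TL (A i j) (x j)}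

/-- Minimal solution. -/
def IsMinimalSol {m n : ℕ} (A : Fin m → Fin n → ℝ) (b : Fin m → ℝ) (x : Fin n → ℝ) : Prop :=
  x ∈ Sset A b ∧ ∀ y ∈ Sset A b, y ≤ x → y = x

/-- The set F_j(z). -/
def Fset {m n : ℕ} (A : Fin m → Fin n → ℝ) (b : Fin m → ℝ) (j : Fin n) (z : Fin n → ℝ) :
    Set ℝ :=
  {t | t ∈ Set.Icc (0:ℝ) 1 ∧
    ∀ i, b i ≤ TL (A i j) t + ∑ k ∈ Finset.univ.erase j, TL (A i k) (z k)}

/-- Objective Z(x) = max_j x_j. -/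
def Zf {n : ℕ} (x : Fin n → ℝ) : ℝ := ⨆ j, x j

/-- Optimal solution of the minimax problem. -/
def IsOptimal {m n : ℕ} (A : Fin m → Fin n → ℝ) (b : Fin m → ℝ) (x : Fin n → ℝ) : Prop :=
  x ∈ Sset A b ∧ ∀ y ∈ Sset A b, Zf x ≤ Zf y

/-! The solution set is upward closed inside `[0,1]^n`, so with any solution `x` the constant
vector `(Z x, …, Z x)` is a solution with the same objective value. The values `t` whose constant
vector solves the system form a compact set; its least element `t` is the optimal value, every
optimal `y` satisfies `y ≤ (t, …, t)`, and an optimal `x` is greatest iff it is that constant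
vector. -/

theorem TL_mono (a : ℝ) : Monotone (TL a) :=
  fun _ _ h => max_le_max (by linarith) le_rfl

theorem continuous_TL (a : ℝ) : Continuous (TL a) := by
  unfold TL
  fun_prop

theorem le_Zf {n : ℕ} (x : Fin n → ℝ) (j : Fin n) : x j ≤ Zf x :=
  le_ciSup (Set.finite_range x).bddAbove j

theorem Zf_const {n : ℕ} [NeZero n] (c : ℝ) : Zf (fun _ : Fin n => c) = c :=
  ciSup_const

section Solutions

variable {m n : ℕ} {A : Fin m → Fin n → ℝ} {b : Fin m → ℝ}

theorem isClosed_Sset : IsClosed (Sset A b) := by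
  simp only [Sset, Set.ofPred_and, Set.ofPred_forall]
  refine (isClosed_iInter fun j => isClosed_Icc.preimage (continuous_apply j)).inter
    (isClosed_iInter fun i => isClosed_le continuous_const ?_)
  exact continuous_finsetSum _ fun j _ => (continuous_TL _).comp (continuous_apply j)

theorem mem_Sset_of_le {x y : Fin n → ℝ} (hx : x ∈ Sset A b) (hxy : x ≤ y)
    (hy : ∀ j, y j ≤ 1) : y ∈ Sset A b :=
  ⟨fun j => ⟨(hx.1 j).1.trans (hxy j), hy j⟩,
    fun i => (hx.2 i).trans (sum_le_sum fun j _ => TL_mono _ (hxy j))⟩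

theorem const_Zf_mem_Sset {x : Fin n → ℝ} (hx : x ∈ Sset A b) :
    (fun _ => Zf x) ∈ Sset A b :=
  mem_Sset_of_le hx (le_Zf x) fun _ => Real.iSup_le (fun j => (hx.1 j).2) zero_le_one

theorem exists_isOptimal_const [NeZero n] (hS : (Sset A b).Nonempty) :
    ∃ t, IsOptimal A b (fun _ => t) := by
  set C : Set ℝ := (fun t _ => t) ⁻¹' Sset A b
  have hC_closed : IsClosed C := isClosed_Sset.preimage (continuous_pi fun _ => continuous_id)
  have hC_sub : C ⊆ Set.Icc 0 1 := fun t ht => ht.1 0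
  obtain ⟨x, hx⟩ := hS
  obtain ⟨t, ht, ht_least⟩ := (isCompact_Icc.of_isClosed_subset hC_closed hC_sub).exists_isLeast
    ⟨Zf x, const_Zf_mem_Sset hx⟩
  refine ⟨t, ht, fun y hy => ?_⟩
  rw [Zf_const]
  exact ht_least (const_Zf_mem_Sset hy)

theorem IsOptimal.Zf_eq {x y : Fin n → ℝ} (hx : IsOptimal A b x) (hy : IsOptimal A b y) :
    Zf x = Zf y :=
  le_antisymm (hx.2 y hy.1) (hy.2 x hx.1)

theorem IsOptimal.le_of_forall_eq_Zf {x : Fin n → ℝ} (hx : IsOptimal A b x)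
    (hx_const : ∀ j, x j = Zf x) (y : Fin n → ℝ) (hy : IsOptimal A b y) : y ≤ x := fun j =>
  calc y j ≤ Zf y := le_Zf y j
    _ = Zf x := hy.Zf_eq hx
    _ = x j := (hx_const j).symm

end Solutions

theorem stmt17_general {m n : ℕ} (hn : 0 < n) (A : Fin m → Fin n → ℝ) (b : Fin m → ℝ)
    (hS : (Sset A b).Nonempty) :
    (∀ x, IsOptimal A b x →
      ((∀ y, IsOptimal A b y → y ≤ x) ↔ ∀ j, x j = Zf x)) ∧
    (∃ x, IsOptimal A b x ∧ ∀ y, IsOptimal A b y → y ≤ x) := by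
  have : NeZero n := ⟨hn.ne'⟩
  obtain ⟨t, ht⟩ := exists_isOptimal_const hS
  have ht_greatest : ∀ y, IsOptimal A b y → y ≤ fun _ => t :=
    ht.le_of_forall_eq_Zf fun _ => (Zf_const t).symm
  refine ⟨fun x hx => ⟨fun hx_greatest j => ?_, hx.le_of_forall_eq_Zf⟩, _, ht, ht_greatest⟩
  have hx_eq : x = fun _ => t := le_antisymm (ht_greatest x hx) (hx_greatest _ ht)
  rw [hx_eq, Zf_const]

theorem stmt17 {m n : ℕ} (hn : 0 < n) (A : Fin m → Fin n → ℝ) (b : Fin m → ℝ)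
    (hA : ∀ i j, A i j ∈ Set.Icc (0:ℝ) 1) (hb : ∀ i, 0 < b i)
    (hS : (Sset A b).Nonempty) :
    (∀ x, IsOptimal A b x →
      ((∀ y, IsOptimal A b y → y ≤ x) ↔ ∀ j, x j = Zf x)) ∧
    (∃ x, IsOptimal A b x ∧ ∀ y, IsOptimal A b y → y ≤ x) :=
  stmt17_general hn A b hS
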